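/- arXiv:1803.03708 — 3 statements merged into one kernel-verified Lean document; each statement's English description precedes it below -/
import Mathlib

section
/- For a board with n squares, the number of equivalence classes of board configurations reachable from a given initial configuration is at most n^4. -/
/-- A board configuration: a king position and a finite set of pawn positions. -/
structure Config (S : Type) where
  king : S
  pawns : Finset S

/-- The pawnspace: squares not blocked by `B` and not occupied by the king. -/
def pawnspace {S : Type} (B : Set S) (C : Config S) : Set S :=
  {s | s ∉ B ∧ s ≠ C.king}

def ValidConfig {S : Type} (B : Set S) (C : Config S) : Prop :=
  C.king ∉ B ∧ (C.pawns : Set S) ⊆ pawnspace B C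

/-- Squares that are empty in configuration `C`. -/
def emptySq {S : Type} (B : Set S) (C : Config S) : Set S :=
  pawnspace B C \ (C.pawns : Set S)

/-- A slide from `s` to `t` along a path of empty squares. -/
def slide {S : Type} (adj : S → S → Prop) (B : Set S) (C : Config S) (s t : S) : Prop :=
  Relation.ReflTransGen (fun a b => adj a b ∧ b ∈ emptySq B C) s t

/-- A single move: slide the king, or slide a pawn, along empty squares. -/
def Move {S : Type} [DecidableEq S] (adj : S → S → Prop) (B : Set S)
    (C C' : Config S) : Prop :=
  (∃ s t, s ∈ C.pawns ∧ t ∈ emptySq B C ∧ slide adj B C s t ∧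
      C' = ⟨C.king, insert t (C.pawns.erase s)⟩) ∨
  (∃ t, t ∈ emptySq B C ∧ slide adj B C C.king t ∧ C' = ⟨t, C.pawns⟩)

def Reachable {S : Type} [DecidableEq S] (adj : S → S → Prop) (B : Set S)
    (C₀ C : Config S) : Prop :=
  Relation.ReflTransGen (Move adj B) C₀ C

def reachIn {S : Type} (adj : S → S → Prop) (T : Set S) (a b : S) : Prop :=
  a ∈ T ∧ b ∈ T ∧ Relation.ReflTransGen (fun x y => adj x y ∧ x ∈ T ∧ y ∈ T) a b

def component {S : Type} (adj : S → S → Prop) (T : Set S) (s : S) : Set S :=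
  {t | reachIn adj T s t}

/-- Same king position and same number of pawns in each pawnspace component. -/
def ConfigEquiv {S : Type} (adj : S → S → Prop) (B : Set S) (C₁ C₂ : Config S) : Prop :=
  C₁.king = C₂.king ∧
    ∀ s ∈ pawnspace B C₁,
      ((C₁.pawns : Set S) ∩ component adj (pawnspace B C₁) s).ncard =
        ((C₂.pawns : Set S) ∩ component adj (pawnspace B C₁) s).ncard

section Helpers

variable {S : Type} {adj : S → S → Prop} {T : Set S} {a b s t : S}

lemma reachIn_refl (h : a ∈ T) : reachIn adj T a a := ⟨h, h, .refl⟩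

lemma reachIn_mono {T' : Set S} (hTT' : T ⊆ T') (h : reachIn adj T a b) :
    reachIn adj T' a b :=
  ⟨hTT' h.1, hTT' h.2.1, Relation.ReflTransGen.mono (fun x y hxy => ⟨hxy.1, hTT' hxy.2.1, hTT' hxy.2.2⟩) _ _ h.2.2⟩

lemma reachIn_trans {c : S} (h1 : reachIn adj T a b) (h2 : reachIn adj T b c) :
    reachIn adj T a c :=
  ⟨h1.1, h2.2.1, h1.2.2.trans h2.2.2⟩

lemma reachIn_symm (hsymm : ∀ a b, adj a b → adj b a) (h : reachIn adj T a b) :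
    reachIn adj T b a :=
  ⟨h.2.1, h.1,
    by
      haveI : Std.Symm (fun x y => adj x y ∧ x ∈ T ∧ y ∈ T) :=
        ⟨fun x y hxy => ⟨hsymm _ _ hxy.1, hxy.2.2, hxy.2.1⟩⟩
      exact Std.Symm.symm _ _ h.2.2⟩

lemma mem_component_self (h : a ∈ T) : a ∈ component adj T a := reachIn_refl h

lemma component_subset : component adj T s ⊆ T := fun _ ht => ht.2.1

lemma component_eq_of_mem (hsymm : ∀ a b, adj a b → adj b a)
    (h : t ∈ component adj T s) : component adj T s = component adj T t :=
  Set.ext fun _ => ⟨fun hx => reachIn_trans (reachIn_symm hsymm h) hx,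
    fun hx => reachIn_trans h hx⟩

lemma component_eq_or_disjoint (hsymm : ∀ a b, adj a b → adj b a) (s t : S) :
    component adj T s = component adj T t ∨ Disjoint (component adj T s) (component adj T t) := by
  by_cases h : Disjoint (component adj T s) (component adj T t)
  · exact Or.inr h
  · left
    obtain ⟨x, hxs, hxt⟩ := Set.not_disjoint_iff.mp h
    rw [component_eq_of_mem hsymm hxs, ← component_eq_of_mem hsymm hxt]

end Helpers

section MoveLemmas

variable {S : Type} [Fintype S] [DecidableEq S] {adj : S → S → Prop} {B : Set S}
  {C C' C₀ : Config S} {s t : S}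

lemma emptySq_subset : emptySq B C ⊆ pawnspace B C := Set.diff_subset

lemma pawnspace_subset : pawnspace B C ⊆ Bᶜ := fun _ hs => hs.1

lemma slide_reachIn_compl (hs : s ∉ B) (h : slide adj B C s t) : reachIn adj Bᶜ s t := by
  induction h with
  | refl => exact reachIn_refl hs
  | tail _ hbc ih =>
    exact reachIn_trans ih ⟨ih.2.1, pawnspace_subset (emptySq_subset hbc.2),
      .single ⟨hbc.1, ih.2.1, pawnspace_subset (emptySq_subset hbc.2)⟩⟩

lemma valid_of_move (h : ValidConfig B C) (hm : Move adj B C C') : ValidConfig B C' := by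
  rcases hm with ⟨s, t, hs, ht, _, rfl⟩ | ⟨t, ht, _, rfl⟩
  · refine ⟨h.1, fun p hp => ?_⟩
    simp only [Finset.coe_insert, Set.mem_insert_iff, Finset.coe_erase, Set.mem_diff] at hp
    rcases hp with rfl | ⟨hp, _⟩
    · have h2 : p ∈ pawnspace B C := emptySq_subset ht
      exact h2
    · exact h.2 hp
  · refine ⟨(emptySq_subset ht).1, fun p hp => ?_⟩
    refine ⟨(h.2 hp).1, fun hpt => ?_⟩
    subst hpt
    exact ht.2 hp

lemma valid_reachable (h0 : ValidConfig B C₀) (h : Reachable adj B C₀ C) :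
    ValidConfig B C := by
  induction h with
  | refl => exact h0
  | tail _ hm ih => exact valid_of_move ih hm

lemma king_not_pawn (h : ValidConfig B C) : C.king ∉ (C.pawns : Set S) :=
  fun hk => (h.2 hk).2 rfl

lemma pcount_move (hsymm : ∀ a b, adj a b → adj b a) (h : ValidConfig B C)
    (hm : Move adj B C C') (x : S) :
    ((C'.pawns : Set S) ∩ component adj Bᶜ x).ncard
      = ((C.pawns : Set S) ∩ component adj Bᶜ x).ncard := by
  rcases hm with ⟨s, t, hs, ht, hsl, rfl⟩ | ⟨t, _, _, rfl⟩
  · have hsB : s ∉ B := (h.2 hs).1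
    have hst : reachIn adj Bᶜ s t := slide_reachIn_compl hsB hsl
    have htp : t ∉ (C.pawns : Set S) := ht.2
    set E := component adj Bᶜ x with hE
    have hiff : s ∈ E ↔ t ∈ E := by
      constructor
      · intro hsE
        rw [hE, component_eq_of_mem hsymm hsE]
        exact hst
      · intro htE
        rw [hE, component_eq_of_mem hsymm htE]
        exact reachIn_symm hsymm hst
    have hcoe : ((insert t (C.pawns.erase s) : Finset S) : Set S)
        = insert t ((C.pawns : Set S) \ {s}) := by
      simp [Finset.coe_insert, Finset.coe_erase]
    by_cases hsE : s ∈ E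
    · have htE : t ∈ E := hiff.mp hsE
      have hset : ((insert t (C.pawns.erase s) : Finset S) : Set S) ∩ E
          = insert t (((C.pawns : Set S) ∩ E) \ {s}) := by
        rw [hcoe]; ext p
        by_cases hpt : p = t <;> simp [hpt, htE] <;> tauto
      rw [hset]
      have h1 : t ∉ ((C.pawns : Set S) ∩ E) \ {s} := fun hc => htp hc.1.1
      rw [Set.ncard_insert_of_notMem h1,
        Set.ncard_diff_singleton_add_one (Set.mem_inter (Finset.mem_coe.mpr hs) hsE)]
    · have htE : t ∉ E := fun hc => hsE (hiff.mpr hc)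
      have hset : ((insert t (C.pawns.erase s) : Finset S) : Set S) ∩ E
          = (C.pawns : Set S) ∩ E := by
        rw [hcoe]; ext p
        constructor
        · rintro ⟨hp1, hp2⟩
          rcases hp1 with rfl | ⟨hp, _⟩
          · exact absurd hp2 htE
          · exact ⟨hp, hp2⟩
        · rintro ⟨hp1, hp2⟩
          refine ⟨Or.inr ⟨hp1, ?_⟩, hp2⟩
          rintro rfl; exact hsE hp2
      rw [hset]
  · rfl

lemma pcount_reachable (hsymm : ∀ a b, adj a b → adj b a) (h0 : ValidConfig B C₀)
    (h : Reachable adj B C₀ C) (x : S) :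
    ((C.pawns : Set S) ∩ component adj Bᶜ x).ncard
      = ((C₀.pawns : Set S) ∩ component adj Bᶜ x).ncard := by
  induction h with
  | refl => rfl
  | tail hr hm ih => rw [pcount_move hsymm (valid_reachable h0 hr) hm x, ih]

lemma king_reachable (hsymm : ∀ a b, adj a b → adj b a) (h0 : ValidConfig B C₀)
    (h : Reachable adj B C₀ C) :
    C.king ∈ component adj Bᶜ C₀.king := by
  induction h with
  | refl => exact mem_component_self h0.1
  | tail hr hm ih =>
    rcases hm with ⟨_, _, _, _, _, rfl⟩ | ⟨t, _, hsl, rfl⟩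
    · exact ih
    · have hb := valid_reachable h0 hr
      have hkt := slide_reachIn_compl hb.1 hsl
      rw [component_eq_of_mem hsymm ih]
      exact hkt

end MoveLemmas
section Structure

variable {S : Type} {adj : S → S → Prop} {B : Set S} {k s t : S}

/-- The pawnspace determined by a king position. -/
def pspace (B : Set S) (k : S) : Set S := {s | s ∉ B ∧ s ≠ k}

lemma pawnspace_eq {C : Config S} : pawnspace B C = pspace B C.king := rfl

lemma pspace_subset : pspace B k ⊆ Bᶜ := fun _ hs => hs.1

lemma comp_out (hsymm : ∀ a b, adj a b → adj b a) (hs : s ∈ pspace B k)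
    (hout : s ∉ component adj Bᶜ k) :
    component adj (pspace B k) s = component adj Bᶜ s := by
  apply Set.Subset.antisymm
  · intro y hy; exact reachIn_mono pspace_subset hy
  · intro y hy
    have hsB : s ∈ (Bᶜ : Set S) := hs.1
    -- induction along the path in Bᶜ
    have main : ∀ y, Relation.ReflTransGen
        (fun x y => adj x y ∧ x ∈ (Bᶜ : Set S) ∧ y ∈ (Bᶜ : Set S)) s y →
        reachIn adj (pspace B k) s y := by
      intro y hpath
      induction hpath with
      | refl => exact reachIn_refl hs
      | @tail b c hab hbc ih =>
        have hbP : b ∈ pspace B k := ih.2.1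
        have hcK : c ≠ k := by
          rintro rfl
          -- then s reaches k in Bᶜ, so s ∈ component of k
          have hsk : reachIn adj Bᶜ s c := ⟨hsB, hbc.2.2, hab.tail hbc⟩
          exact hout (reachIn_symm hsymm hsk)
        have hcP : c ∈ pspace B k := ⟨hbc.2.2, hcK⟩
        exact reachIn_trans ih ⟨hbP, hcP, .single ⟨hbc.1, hbP, hcP⟩⟩
    exact main y hy.2.2

lemma comp_in_nbr (hs : s ∈ pspace B k) (hin : s ∈ component adj Bᶜ k) :
    ∃ t, adj k t ∧ t ∈ pspace B k ∧ s ∈ component adj (pspace B k) t := by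
  have main : ∀ s, Relation.ReflTransGen
      (fun x y => adj x y ∧ x ∈ (Bᶜ : Set S) ∧ y ∈ (Bᶜ : Set S)) k s →
      s ∈ pspace B k →
      ∃ t, adj k t ∧ t ∈ pspace B k ∧ s ∈ component adj (pspace B k) t := by
    intro s hpath
    induction hpath with
    | refl => intro hs; exact absurd rfl hs.2
    | @tail b c hab hbc ih =>
      intro hc
      by_cases hbk : b = k
      · subst hbk
        exact ⟨c, hbc.1, hc, mem_component_self hc⟩
      · have hbP : b ∈ pspace B k := ⟨hbc.2.1, hbk⟩
        obtain ⟨t, h1, h2, h3⟩ := ih hbP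
        exact ⟨t, h1, h2, reachIn_trans h3 ⟨hbP, hc, .single ⟨hbc.1, hbP, hc⟩⟩⟩
  exact main s hin.2.2 hs

lemma nbr_mem_K (hkB : k ∉ B) (ht : adj k t) (htP : t ∈ pspace B k) :
    t ∈ component adj Bᶜ k := ⟨hkB, htP.1, .single ⟨ht, hkB, htP.1⟩⟩

lemma comp_nbr_subset (htK : t ∈ component adj Bᶜ k) :
    component adj (pspace B k) t ⊆ component adj Bᶜ k \ {k} := fun x hx =>
  ⟨reachIn_trans htK (reachIn_mono pspace_subset hx), hx.2.1.2⟩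

end Structure
section Counting

lemma pcount_sUnion {S : Type} [Fintype S] (P₁ P₂ : Set S) (𝒞 : Finset (Set S))
    (hdisj : (↑𝒞 : Set (Set S)).Pairwise Disjoint)
    (hcnt : ∀ A ∈ 𝒞, (P₁ ∩ A).ncard = (P₂ ∩ A).ncard) :
    (P₁ ∩ ⋃₀ ↑𝒞).ncard = (P₂ ∩ ⋃₀ ↑𝒞).ncard := by
  classical
  induction 𝒞 using Finset.induction_on with
  | empty => simp
  | @insert A 𝒞 hA ih =>
    have hd : Disjoint A (⋃₀ (↑𝒞 : Set (Set S))) := by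
      rw [Set.disjoint_sUnion_right]
      intro D hD
      exact hdisj (Finset.mem_coe.mpr (Finset.mem_insert_self A 𝒞))
        (Finset.mem_coe.mpr (Finset.mem_insert_of_mem hD))
        (fun hAD => hA (hAD ▸ hD))
    have hcoe : (↑(insert A 𝒞) : Set (Set S)) = insert A ↑𝒞 := Finset.coe_insert A 𝒞
    rw [hcoe, Set.sUnion_insert, Set.inter_union_distrib_left, Set.inter_union_distrib_left,
      Set.ncard_union_eq (hd.mono Set.inter_subset_right Set.inter_subset_right),
      Set.ncard_union_eq (hd.mono Set.inter_subset_right Set.inter_subset_right),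
      hcnt A (Finset.mem_insert_self A 𝒞),
      ih (hdisj.mono (by rw [hcoe]; exact Set.subset_insert A ↑𝒞))
        (fun D hD => hcnt D (Finset.mem_insert_of_mem hD))]

lemma ncard_image_le_of_factor {α β γ : Type} (A : Set α) (f : α → β) (g : α → γ)
    (hfin : (g '' A).Finite)
    (h : ∀ a ∈ A, ∀ b ∈ A, g a = g b → f a = f b) :
    (f '' A).ncard ≤ (g '' A).ncard := by
  classical
  rcases A.eq_empty_or_nonempty with rfl | ⟨a₀, ha₀⟩
  · simp
  · have himg : ∀ c, c ∈ g '' A → ∃ b, ∀ a ∈ A, g a = c → f a = b := by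
      rintro c ⟨a, ha, rfl⟩
      exact ⟨f a, fun a' ha' hg => h a' ha' a ha hg⟩
    have : Nonempty β := ⟨f a₀⟩
    choose! ψ hψ using himg
    have heq : f '' A = ψ '' (g '' A) := by
      ext y
      constructor
      · rintro ⟨a, ha, rfl⟩
        exact ⟨g a, ⟨a, ha, rfl⟩, (hψ (g a) ⟨a, ha, rfl⟩ a ha rfl).symm⟩
      · rintro ⟨c, hc, rfl⟩
        obtain ⟨a, ha, rfl⟩ := hc
        exact ⟨a, ha, hψ (g a) ⟨a, ha, rfl⟩ a ha rfl⟩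
    rw [heq]
    exact Set.ncard_image_le hfin

end Counting

section EquivRel

variable {S : Type} [Fintype S] [DecidableEq S] {adj : S → S → Prop} {B : Set S}
  {C₀ C C' C₁ C₂ C₃ : Config S}

lemma pawnspace_congr (h : C₁.king = C₂.king) : pawnspace B C₁ = pawnspace B C₂ := by
  rw [pawnspace_eq, pawnspace_eq, h]

lemma configEquiv_symm (h : ConfigEquiv adj B C₁ C₂) : ConfigEquiv adj B C₂ C₁ := by
  refine ⟨h.1.symm, fun s hs => ?_⟩
  have hp : pawnspace B C₂ = pawnspace B C₁ := pawnspace_congr h.1.symm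
  rw [hp] at hs ⊢
  exact (h.2 s hs).symm

lemma configEquiv_trans (h : ConfigEquiv adj B C₁ C₂) (h' : ConfigEquiv adj B C₂ C₃) :
    ConfigEquiv adj B C₁ C₃ := by
  refine ⟨h.1.trans h'.1, fun s hs => ?_⟩
  have hp : pawnspace B C₁ = pawnspace B C₂ := pawnspace_congr h.1
  rw [h.2 s hs, hp]
  rw [hp] at hs
  exact h'.2 s hs

/-- Stage A: if two reachable configurations have the same king and the same pawn
counts on the components of every pawnspace-neighbor of the king, they are equivalent. -/
lemma equiv_of_nbr_counts (hsymm : ∀ a b, adj a b → adj b a) (hC₀ : ValidConfig B C₀)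
    (hC : Reachable adj B C₀ C) (hC' : Reachable adj B C₀ C') (hk : C'.king = C.king)
    (hcnt : ∀ t, adj C.king t → t ∈ pspace B C.king →
      ((C.pawns : Set S) ∩ component adj (pspace B C.king) t).ncard =
      ((C'.pawns : Set S) ∩ component adj (pspace B C.king) t).ncard) :
    ConfigEquiv adj B C C' := by
  refine ⟨hk.symm, fun s hs => ?_⟩
  rw [pawnspace_eq] at hs ⊢
  by_cases hin : s ∈ component adj Bᶜ C.king
  · obtain ⟨t, h1, h2, h3⟩ := comp_in_nbr hs hin
    rw [← component_eq_of_mem hsymm h3]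
    exact hcnt t h1 h2
  · rw [comp_out hsymm hs hin]
    rw [pcount_reachable hsymm hC₀ hC s, pcount_reachable hsymm hC₀ hC' s]

end EquivRel
section StageB

variable {S : Type} [Fintype S] [DecidableEq S] {adj : S → S → Prop} {B : Set S}
  {C₀ C C' : Config S}

lemma all_nbr_counts (hsymm : ∀ a b, adj a b → adj b a) (hC₀ : ValidConfig B C₀)
    (hC : Reachable adj B C₀ C) (hC' : Reachable adj B C₀ C')
    (hk : C'.king = C.king)
    (l : List S) (hmeml : ∀ u, u ∈ l ↔ adj C.king u ∧ u ∈ pspace B C.king)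
    (hlen : l.length ≤ 4)
    (h3 : ∀ i, i < 3 →
      ((C.pawns : Set S) ∩ component adj (pspace B C.king) (l.getD i C.king)).ncard =
      ((C'.pawns : Set S) ∩ component adj (pspace B C.king) (l.getD i C.king)).ncard) :
    ∀ t, adj C.king t → t ∈ pspace B C.king →
      ((C.pawns : Set S) ∩ component adj (pspace B C.king) t).ncard =
      ((C'.pawns : Set S) ∩ component adj (pspace B C.king) t).ncard := by
  classical
  intro t hadj htP
  set k := C.king with hkdef
  set P := pspace B k with hPdef
  have htl : t ∈ l := (hmeml t).mpr ⟨hadj, htP⟩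
  obtain ⟨i, hi, hit⟩ := List.mem_iff_getElem.mp htl
  have h3' : ∀ j (hj : j < l.length), j < 3 →
      ((C.pawns : Set S) ∩ component adj P (l[j])).ncard =
      ((C'.pawns : Set S) ∩ component adj P (l[j])).ncard := by
    intro j hj hj3
    have := h3 j hj3
    rwa [List.getD_eq_getElem l k hj] at this
  by_cases hcase : ∃ j, ∃ hj : j < l.length, j < 3 ∧
      component adj P t = component adj P (l[j])
  · obtain ⟨j, hj, hj3, hcomp⟩ := hcase
    rw [hcomp]
    exact h3' j hj hj3
  · -- the hard case: t is a 4th neighbor in a new component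
    push_neg at hcase
    have hi3 : i = 3 := by
      by_contra hne
      have hilt : i < 3 := by omega
      exact (hcase i hi hilt) (by rw [hit])
    have hlen4 : l.length = 4 := by omega
    have hnbr : ∀ j (hj : j < l.length), adj k (l[j]) ∧ l[j] ∈ P :=
      fun j hj => (hmeml (l[j])).mp (List.getElem_mem hj)
    have hkB : k ∉ B := (valid_reachable hC₀ hC).1
    set K := component adj Bᶜ k with hKdef
    have h0 : (0:ℕ) < l.length := by omega
    have h1 : (1:ℕ) < l.length := by omega
    have h2 : (2:ℕ) < l.length := by omega
    set D := component adj P t with hDdef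
    set U := component adj P (l[0]) ∪ component adj P (l[1]) ∪ component adj P (l[2])
      with hUdef
    -- K \ {k} = U ∪ D
    have hsplit : K \ {k} = U ∪ D := by
      apply Set.Subset.antisymm
      · rintro x ⟨hxK, hxk⟩
        have hxP : x ∈ P := ⟨component_subset hxK, hxk⟩
        obtain ⟨u, hu1, hu2, hu3⟩ := comp_in_nbr hxP hxK
        have hul : u ∈ l := (hmeml u).mpr ⟨hu1, hu2⟩
        obtain ⟨j, hj, hju⟩ := List.mem_iff_getElem.mp hul
        have hj4 : j < 4 := by omega
        interval_cases j
        · exact Or.inl (Or.inl (Or.inl (hju ▸ hu3)))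
        · exact Or.inl (Or.inl (Or.inr (hju ▸ hu3)))
        · exact Or.inl (Or.inr (hju ▸ hu3))
        · subst hi3
          have hut : u = t := by rw [← hju]; exact hit
          subst hut
          exact Or.inr hu3
      · rintro x (((hx | hx) | hx) | hx)
        · exact comp_nbr_subset (nbr_mem_K hkB (hnbr 0 h0).1 (hnbr 0 h0).2) hx
        · exact comp_nbr_subset (nbr_mem_K hkB (hnbr 1 h1).1 (hnbr 1 h1).2) hx
        · exact comp_nbr_subset (nbr_mem_K hkB (hnbr 2 h2).1 (hnbr 2 h2).2) hx
        · exact comp_nbr_subset (nbr_mem_K hkB hadj htP) hx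
    -- D is disjoint from U
    have hDj : ∀ j (hj : j < l.length), j < 3 → Disjoint (component adj P (l[j])) D := by
      intro j hj hj3
      rcases component_eq_or_disjoint (adj := adj) (T := P) hsymm (l[j]) t with he | hd
      · exact absurd he.symm (hcase j hj hj3)
      · exact hd
    have hdisjUD : Disjoint U D := by
      rw [hUdef]
      exact Disjoint.union_left (Disjoint.union_left (hDj 0 h0 (by norm_num))
        (hDj 1 h1 (by norm_num))) (hDj 2 h2 (by norm_num))
    -- counts on U agree
    have hU : ((C.pawns : Set S) ∩ U).ncard = ((C'.pawns : Set S) ∩ U).ncard := by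
      have hUU : U = ⋃₀ ↑({component adj P (l[0]), component adj P (l[1]),
          component adj P (l[2])} : Finset (Set S)) := by
        simp [hUdef, Set.sUnion_insert, Set.union_assoc]
      rw [hUU]
      apply pcount_sUnion
      · intro X hX Y hY hXY
        simp only [Finset.coe_insert, Set.mem_insert_iff, Finset.coe_singleton,
          Set.mem_singleton_iff] at hX hY
        have hgen : ∀ Z, (Z = component adj P (l[0]) ∨ Z = component adj P (l[1]) ∨
            Z = component adj P (l[2])) → ∃ j, ∃ hj : j < l.length, j < 3 ∧
            Z = component adj P (l[j]) := by
          rintro Z (rfl | rfl | rfl)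
          · exact ⟨0, h0, by norm_num, rfl⟩
          · exact ⟨1, h1, by norm_num, rfl⟩
          · exact ⟨2, h2, by norm_num, rfl⟩
        obtain ⟨j1, hj1, _, rfl⟩ := hgen X hX
        obtain ⟨j2, hj2, _, rfl⟩ := hgen Y hY
        rcases component_eq_or_disjoint (adj := adj) (T := P) hsymm (l[j1]) (l[j2])
          with he | hd
        · exact absurd he hXY
        · exact hd
      · intro A hA
        simp only [Finset.mem_insert, Finset.mem_singleton] at hA
        rcases hA with rfl | rfl | rfl
        · exact h3' 0 h0 (by norm_num)
        · exact h3' 1 h1 (by norm_num)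
        · exact h3' 2 h2 (by norm_num)
    -- counts on K agree
    have hKC : ((C.pawns : Set S) ∩ K).ncard = ((C'.pawns : Set S) ∩ K).ncard := by
      rw [pcount_reachable hsymm hC₀ hC k, pcount_reachable hsymm hC₀ hC' k]
    -- remove k from K : the king is not a pawn
    have hxk : ∀ X : Config S, ValidConfig B X → X.king = k →
        (X.pawns : Set S) ∩ K = (X.pawns : Set S) ∩ (K \ {k}) := by
      intro X hX hXk
      ext p
      simp only [Set.mem_inter_iff, Set.mem_diff, Set.mem_singleton_iff]
      constructor
      · rintro ⟨hp1, hp2⟩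
        refine ⟨hp1, hp2, ?_⟩
        rintro rfl
        exact king_not_pawn hX (hXk ▸ hp1)
      · rintro ⟨hp1, hp2, _⟩
        exact ⟨hp1, hp2⟩
    have hvC := valid_reachable hC₀ hC
    have hvC' := valid_reachable hC₀ hC'
    -- split counts over the disjoint union
    have hsum : ∀ X : Config S,
        ((X.pawns : Set S) ∩ (U ∪ D)).ncard =
        ((X.pawns : Set S) ∩ U).ncard + ((X.pawns : Set S) ∩ D).ncard := by
      intro X
      rw [Set.inter_union_distrib_left]
      exact Set.ncard_union_eq (hdisjUD.mono Set.inter_subset_right Set.inter_subset_right)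
    have eC : ((C.pawns : Set S) ∩ K).ncard =
        ((C.pawns : Set S) ∩ U).ncard + ((C.pawns : Set S) ∩ D).ncard := by
      rw [hxk C hvC rfl, hsplit, hsum]
    have eC' : ((C'.pawns : Set S) ∩ K).ncard =
        ((C'.pawns : Set S) ∩ U).ncard + ((C'.pawns : Set S) ∩ D).ncard := by
      rw [hxk C' hvC' hk, hsplit, hsum]
    -- conclude
    have : ((C.pawns : Set S) ∩ D).ncard = ((C'.pawns : Set S) ∩ D).ncard := by omega
    exact this

end StageB
/-- on a board with `n` squares (grid-like: symmetric adjacency of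
degree at most 4), the number of equivalence classes of board configurations
reachable from a given initial configuration is at most `n ^ 4`. -/
theorem card_equivClasses_le {S : Type} [Fintype S] [DecidableEq S]
    (adj : S → S → Prop) (hsymm : ∀ a b, adj a b → adj b a)
    (hdeg : ∀ s, {t | adj s t}.ncard ≤ 4)
    (B : Set S) (C₀ : Config S) (hC₀ : ValidConfig B C₀) :
    {E : Set (Config S) | ∃ C, Reachable adj B C₀ C ∧
        E = {C' | Reachable adj B C₀ C' ∧ ConfigEquiv adj B C C'}}.ncard
      ≤ (Fintype.card S) ^ 4 := by
  classical
  set n := Fintype.card S with hn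
  have hnpos : 0 < n := Fintype.card_pos_iff.mpr ⟨C₀.king⟩
  letI : LinearOrder S := LinearOrder.lift' (Fintype.equivFin S) (Equiv.injective _)
  set nlist : S → List S := fun k =>
    ((Set.toFinite {t | adj k t ∧ t ∈ pspace B k}).toFinset).sort (· ≤ ·) with hnlist
  have hmem : ∀ k u, u ∈ nlist k ↔ adj k u ∧ u ∈ pspace B k := by
    intro k u
    simp [hnlist, Finset.mem_sort, Set.Finite.mem_toFinset]
  have hlen : ∀ k, (nlist k).length ≤ 4 := by
    intro k
    rw [hnlist]; dsimp only
    rw [Finset.length_sort, ← Set.ncard_eq_toFinset_card _ (Set.toFinite _)]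
    calc {t | adj k t ∧ t ∈ pspace B k}.ncard
        ≤ {t | adj k t}.ncard := Set.ncard_le_ncard (fun x hx => hx.1)
      _ ≤ 4 := hdeg k
  set cnt : Config S → S → ℕ := fun C t =>
    ((C.pawns : Set S) ∩ component adj (pspace B C.king) t).ncard with hcnt
  have hcnt_lt : ∀ C t, cnt C t < n := by
    intro C t
    have hsub : (C.pawns : Set S) ∩ component adj (pspace B C.king) t ⊂ Set.univ := by
      rw [Set.ssubset_univ_iff]
      intro h
      have hking : C.king ∈ (C.pawns : Set S) ∩ component adj (pspace B C.king) t := by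
        rw [h]; trivial
      exact (component_subset hking.2).2 rfl
    calc cnt C t < (Set.univ : Set S).ncard := Set.ncard_lt_ncard hsub
      _ = n := by rw [Set.ncard_univ, Nat.card_eq_fintype_card]
  set Φ : Config S → S × Fin n × Fin n × Fin n := fun C =>
    (C.king, ⟨cnt C ((nlist C.king).getD 0 C.king), hcnt_lt C _⟩,
             ⟨cnt C ((nlist C.king).getD 1 C.king), hcnt_lt C _⟩,
             ⟨cnt C ((nlist C.king).getD 2 C.king), hcnt_lt C _⟩) with hΦ
  set A : Set (Config S) := {C | Reachable adj B C₀ C} with hA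
  set q : Config S → Set (Config S) := fun C =>
    {C' | Reachable adj B C₀ C' ∧ ConfigEquiv adj B C C'} with hq
  have hfac : ∀ a ∈ A, ∀ b ∈ A, Φ a = Φ b → q a = q b := by
    intro C hCr C' hC'r hΦeq
    have hCr' : Reachable adj B C₀ C := hCr
    have hC'r' : Reachable adj B C₀ C' := hC'r
    rw [hΦ] at hΦeq
    simp only [Prod.mk.injEq, Fin.mk.injEq] at hΦeq
    obtain ⟨hk, he0, he1, he2⟩ := hΦeq
    have hk' : C'.king = C.king := hk.symm
    rw [hk'] at he0 he1 he2
    have h3 : ∀ i, i < 3 →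
        ((C.pawns : Set S) ∩ component adj (pspace B C.king)
          ((nlist C.king).getD i C.king)).ncard =
        ((C'.pawns : Set S) ∩ component adj (pspace B C.king)
          ((nlist C.king).getD i C.king)).ncard := by
      intro i hi
      have hcnt' : ∀ X : Config S, X.king = C.king → ∀ t, cnt X t =
          ((X.pawns : Set S) ∩ component adj (pspace B C.king) t).ncard := by
        intro X hX t; rw [hcnt]; dsimp only; rw [hX]
      interval_cases i
      · rw [← hcnt' C rfl, ← hcnt' C' hk']; exact he0
      · rw [← hcnt' C rfl, ← hcnt' C' hk']; exact he1
      · rw [← hcnt' C rfl, ← hcnt' C' hk']; exact he2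
    have hcntall := all_nbr_counts hsymm hC₀ hCr' hC'r' hk' (nlist C.king)
      (hmem C.king) (hlen C.king) h3
    have hequiv : ConfigEquiv adj B C C' :=
      equiv_of_nbr_counts hsymm hC₀ hCr' hC'r' hk' hcntall
    rw [hq]
    ext X
    simp only [Set.mem_setOf_eq]
    constructor
    · rintro ⟨hr, he⟩
      exact ⟨hr, configEquiv_trans (configEquiv_symm hequiv) he⟩
    · rintro ⟨hr, he⟩
      exact ⟨hr, configEquiv_trans hequiv he⟩
  have hclasses : {E : Set (Config S) | ∃ C, Reachable adj B C₀ C ∧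
      E = {C' | Reachable adj B C₀ C' ∧ ConfigEquiv adj B C C'}} = q '' A := by
    ext E
    simp only [Set.mem_setOf_eq, Set.mem_image, hA, hq]
    constructor
    · rintro ⟨C, h1, h2⟩; exact ⟨C, h1, h2.symm⟩
    · rintro ⟨C, h1, h2⟩; exact ⟨C, h1, h2.symm⟩
  rw [hclasses]
  calc (q '' A).ncard ≤ (Φ '' A).ncard :=
        ncard_image_le_of_factor A q Φ (Set.toFinite _) hfac
    _ ≤ (Set.univ : Set (S × Fin n × Fin n × Fin n)).ncard :=
        Set.ncard_le_ncard (Set.subset_univ _)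
    _ = n ^ 4 := by
        rw [Set.ncard_univ, Nat.card_eq_fintype_card]
        simp only [Fintype.card_prod, Fintype.card_fin, ← hn]
        ring
end

section
/- If two board configurations C₁ and C₂ on a board of n squares are equivalent (same king position, same number of pawns in each connected component of the pawnspace), then C₂ can be reached from C₁ by a sequence of at most n² − 1 pawn moves, each moving a pawn along a path of empty squares within its connected component, and every intermediate configuration remains in the same equivalence class. -/
/-- A pawn move (king fixed): a pawn at `s` moves to `t` along a path of
squares of the pawnspace `PS` not occupied by pawns. -/
def PawnMove {S : Type} [DecidableEq S] (adj : S → S → Prop) (PS : Set S)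
    (P P' : Finset S) : Prop :=
  ∃ s ∈ P, ∃ t, t ∈ PS ∧ t ∉ P ∧
    Relation.ReflTransGen (fun a b => adj a b ∧ b ∈ PS ∧ b ∉ P) s t ∧
    P' = insert t (P.erase s)

/-- Two pawn configurations are equivalent iff they have the same number of
pawns in every connected component of the pawnspace. -/
def PawnEquiv {S : Type} (adj : S → S → Prop) (PS : Set S) (P₁ P₂ : Finset S) : Prop :=
  ∀ s ∈ PS, ((P₁ : Set S) ∩ component adj PS s).ncard =
    ((P₂ : Set S) ∩ component adj PS s).ncard

namespace PawnAux

open Relation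

variable {S : Type} [Fintype S] [DecidableEq S]

/-- The graph on the pawnspace. -/
def Gr (adj : S → S → Prop) (PS : Set S) (hsymm : ∀ a b, adj a b → adj b a) :
    SimpleGraph S where
  Adj a b := a ≠ b ∧ a ∈ PS ∧ b ∈ PS ∧ adj a b
  symm := ⟨fun a b ⟨hne, ha, hb, h⟩ => ⟨hne.symm, hb, ha, hsymm a b h⟩⟩
  loopless := ⟨fun a h => h.1 rfl⟩

variable {adj : S → S → Prop} {PS : Set S}

lemma reachIn_symm (hsymm : ∀ a b, adj a b → adj b a) {a b : S} (h : reachIn adj PS a b) : reachIn adj PS b a := by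
  obtain ⟨ha, hb, h⟩ := h
  haveI : Std.Symm (fun x y => adj x y ∧ x ∈ PS ∧ y ∈ PS) :=
    ⟨fun x y ⟨h1, h2, h3⟩ => ⟨hsymm x y h1, h3, h2⟩⟩
  exact ⟨hb, ha, Std.Symm.symm _ _ h⟩

lemma reachIn_trans {a b c : S} (h : reachIn adj PS a b) (h' : reachIn adj PS b c) :
    reachIn adj PS a c :=
  ⟨h.1, h'.2.1, h.2.2.trans h'.2.2⟩

lemma reachIn_refl {a : S} (ha : a ∈ PS) : reachIn adj PS a a :=
  ⟨ha, ha, Relation.ReflTransGen.refl⟩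

lemma rtg_walk (hsymm : ∀ a b, adj a b → adj b a) {a b : S} (h : Relation.ReflTransGen
    (fun x y => adj x y ∧ x ∈ PS ∧ y ∈ PS) a b) :
    Nonempty ((Gr adj PS hsymm).Walk a b) := by
  induction h with
  | refl => exact ⟨.nil⟩
  | @tail b c hab hbc ih =>
    obtain ⟨w⟩ := ih
    obtain ⟨h1, h2, h3⟩ := hbc
    by_cases hbc' : b = c
    · exact ⟨hbc' ▸ w⟩
    · exact ⟨w.concat ⟨hbc', h2, h3, h1⟩⟩

/-- From a walk from an empty square `t` to an occupied square `s`, extract the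
first occupied square `u` on it: `u` can move to `t` along empty squares, and
there remains a strictly shorter walk from `u` to `s`. -/
lemma extract (hsymm : ∀ a b, adj a b → adj b a) {P : Finset S} {s : S} (hs : s ∈ P) :
    ∀ {t : S} (w : (Gr adj PS hsymm).Walk t s), t ∉ P →
      ∃ u ∈ P, Relation.ReflTransGen (fun a b => adj a b ∧ b ∈ PS ∧ b ∉ P) u t ∧
        reachIn adj PS u t ∧
        ∃ w2 : (Gr adj PS hsymm).Walk u s, w2.length < w.length := by
  intro t w
  induction w with
  | nil => intro ht; exact absurd hs ht
  | @cons a v b hadj w ih =>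
    intro ht
    obtain ⟨hne, haPS, hvPS, hadj'⟩ := hadj
    by_cases hv : v ∈ P
    · refine ⟨v, hv, Relation.ReflTransGen.single ⟨hsymm _ _ hadj', haPS, ht⟩,
        ⟨hvPS, haPS, Relation.ReflTransGen.single ⟨hsymm _ _ hadj', hvPS, haPS⟩⟩,
        w, ?_⟩
      exact Nat.lt_succ_self _
    · obtain ⟨u, hu, hrtg, hreach, w2, hlt⟩ := ih hs hv
      refine ⟨u, hu, hrtg.tail ⟨hsymm _ _ hadj', haPS, ht⟩,
        reachIn_trans hreach
          ⟨hvPS, haPS, Relation.ReflTransGen.single ⟨hsymm _ _ hadj', hvPS, haPS⟩⟩,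
        w2, ?_⟩
      exact Nat.lt_succ_of_lt hlt

/-- Moving a pawn within its component preserves the class. -/
lemma equiv_insert_erase (hsymm : ∀ a b, adj a b → adj b a) {P : Finset S} {u t : S} (hu : u ∈ P) (ht : t ∉ P)
    (hreach : reachIn adj PS u t) :
    PawnEquiv adj PS (insert t (P.erase u)) P := by
  intro x hx
  set C := component adj PS x with hC
  by_cases htC : t ∈ C
  · have huC : u ∈ C := reachIn_trans htC (reachIn_symm hsymm hreach)
    have e1 : ((insert t (P.erase u) : Finset S) : Set S) ∩ C
        = insert t ((↑P ∩ C) \ {u}) := by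
      rw [Finset.coe_insert, Finset.coe_erase, Set.insert_inter_of_mem htC]
      congr 1
      ext y
      simp only [Set.mem_inter_iff, Set.mem_diff, Set.mem_singleton_iff,
        Finset.mem_coe]
      tauto
    rw [e1]
    rw [Set.ncard_insert_of_notMem (by simp [ht])]
    exact Set.ncard_diff_singleton_add_one ⟨hu, huC⟩
  · have huC : u ∉ C := fun h => htC (reachIn_trans h hreach)
    congr 1
    rw [Finset.coe_insert, Finset.coe_erase, Set.insert_inter_of_notMem htC]
    ext y
    simp only [Set.mem_inter_iff, Set.mem_diff, Set.mem_singleton_iff,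
      Finset.mem_coe]
    constructor
    · tauto
    · rintro ⟨hy, hyC⟩; exact ⟨⟨hy, fun h => huC (h ▸ hyC)⟩, hyC⟩

lemma exists_target (hsymm : ∀ a b, adj a b → adj b a) {P P₂ : Finset S} (hP : (P : Set S) ⊆ PS)
    (heq : PawnEquiv adj PS P P₂) (hne : P ≠ P₂) : ∃ t, t ∈ P₂ ∧ t ∉ P := by
  by_contra h
  push_neg at h
  have hsub : P₂ ⊆ P := h
  have hss : P₂ ⊂ P := lt_of_le_of_ne hsub (Ne.symm hne)
  obtain ⟨x, hxP, hxP₂⟩ := Finset.exists_of_ssubset hss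
  have hx : x ∈ PS := hP hxP
  have key := heq x hx
  have hsub2 : (↑P₂ : Set S) ∩ component adj PS x ⊆ ↑P ∩ component adj PS x :=
    Set.inter_subset_inter_left _ (by exact_mod_cast hsub)
  have := Set.eq_of_subset_of_ncard_le hsub2 key.le
  have hxC : x ∈ (↑P : Set S) ∩ component adj PS x := ⟨hxP, reachIn_refl hx⟩
  rw [← this] at hxC
  exact hxP₂ hxC.1

lemma exists_source (hsymm : ∀ a b, adj a b → adj b a) {P P₂ : Finset S} (h₂ : (P₂ : Set S) ⊆ PS)
    (heq : PawnEquiv adj PS P P₂) {t : S} (ht₂ : t ∈ P₂) (htP : t ∉ P) :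
    ∃ s, s ∈ P ∧ s ∉ P₂ ∧ reachIn adj PS t s := by
  have htPS : t ∈ PS := h₂ ht₂
  have key := heq t htPS
  have hns : ¬ ((↑P : Set S) ∩ component adj PS t ⊆ ↑P₂ ∩ component adj PS t) := by
    intro hsub
    have := Set.eq_of_subset_of_ncard_le hsub key.ge
    have htC : t ∈ (↑P₂ : Set S) ∩ component adj PS t := ⟨ht₂, reachIn_refl htPS⟩
    rw [← this] at htC
    exact htP htC.1
  obtain ⟨s, hs, hs2⟩ := Set.not_subset.1 hns
  refine ⟨s, hs.1, fun h => hs2 ⟨h, hs.2⟩, hs.2⟩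

/-- The set of lengths of walks from an unfilled target square to a misplaced pawn. -/
def wkset (adj : S → S → Prop) (PS : Set S) (hsymm : ∀ a b, adj a b → adj b a)
    (P₂ P : Finset S) : Set ℕ :=
  {m | ∃ t s : S, t ∈ P₂ ∧ t ∉ P ∧ s ∈ P ∧ s ∉ P₂ ∧
    ∃ w : (Gr adj PS hsymm).Walk t s, w.length = m}

noncomputable def DD (adj : S → S → Prop) (PS : Set S)
    (hsymm : ∀ a b, adj a b → adj b a) (P₂ P : Finset S) : ℕ :=
  if P = P₂ then 0 else sInf (wkset adj PS hsymm P₂ P)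

noncomputable def Phi (adj : S → S → Prop) (PS : Set S)
    (hsymm : ∀ a b, adj a b → adj b a) (P₂ P : Finset S) : ℕ :=
  Fintype.card S * (P₂ \ P).card + DD adj PS hsymm P₂ P

lemma wkset_nonempty (hsymm : ∀ a b, adj a b → adj b a) {P P₂ : Finset S} (hP : (P : Set S) ⊆ PS)
    (h₂ : (P₂ : Set S) ⊆ PS) (heq : PawnEquiv adj PS P P₂) (hne : P ≠ P₂) :
    (wkset adj PS hsymm P₂ P).Nonempty := by
  obtain ⟨t, ht₂, htP⟩ := exists_target hsymm hP heq hne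
  obtain ⟨s, hsP, hsP₂, hreach⟩ := exists_source hsymm h₂ heq ht₂ htP
  obtain ⟨w⟩ := rtg_walk hsymm hreach.2.2
  exact ⟨w.length, t, s, ht₂, htP, hsP, hsP₂, w, rfl⟩

lemma sInf_wkset_lt (hsymm : ∀ a b, adj a b → adj b a) (P P₂ : Finset S) (hne : (wkset adj PS hsymm P₂ P).Nonempty) :
    sInf (wkset adj PS hsymm P₂ P) < Fintype.card S := by
  obtain ⟨t, s, ht₂, htP, hsP, hsP₂, w, hw⟩ := Nat.sInf_mem hne
  have hmem : w.bypass.length ∈ wkset adj PS hsymm P₂ P :=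
    ⟨t, s, ht₂, htP, hsP, hsP₂, w.bypass, rfl⟩
  exact lt_of_le_of_lt (Nat.sInf_le hmem) w.bypass_isPath.length_lt

/-- Key step: a single pawn move strictly decreasing the potential. -/
lemma step_lemma (hsymm : ∀ a b, adj a b → adj b a) {P₂ : Finset S} (h₂ : (P₂ : Set S) ⊆ PS)
    {P : Finset S} (hP : (P : Set S) ⊆ PS)
    (heq : PawnEquiv adj PS P P₂) (hne : P ≠ P₂) :
    ∃ P' : Finset S, PawnMove adj PS P P' ∧ (P' : Set S) ⊆ PS ∧
      PawnEquiv adj PS P' P₂ ∧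
      Phi adj PS hsymm P₂ P' < Phi adj PS hsymm P₂ P := by
  have hwne := wkset_nonempty hsymm hP h₂ heq hne
  obtain ⟨t, s, ht₂, htP, hsP, hsP₂, w, hw⟩ := Nat.sInf_mem hwne
  obtain ⟨u, huP, hrtg, hreach, w2, hlt⟩ := extract hsymm hsP w htP
  set P' : Finset S := insert t (P.erase u) with hP'
  have htPS : t ∈ PS := h₂ ht₂
  have hut : u ≠ t := fun h => htP (h ▸ huP)
  have hmove : PawnMove adj PS P P' := ⟨u, huP, t, htPS, htP, hrtg, rfl⟩
  have hP'sub : (P' : Set S) ⊆ PS := by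
    intro y hy
    simp only [hP', Finset.coe_insert, Set.mem_insert_iff, Finset.coe_erase,
      Set.mem_diff, Finset.mem_coe] at hy
    rcases hy with rfl | ⟨hyP, _⟩
    exacts [htPS, hP hyP]
  have heq' : PawnEquiv adj PS P' P₂ := fun x hx =>
    (equiv_insert_erase hsymm huP htP hreach x hx).trans (heq x hx)
  have hDP : DD adj PS hsymm P₂ P = sInf (wkset adj PS hsymm P₂ P) := if_neg hne
  refine ⟨P', hmove, hP'sub, heq', ?_⟩
  by_cases hu₂ : u ∈ P₂
  · -- the moved pawn was correctly placed: same card, smaller distance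
    have hus : u ≠ s := fun h => hsP₂ (h ▸ hu₂)
    have huP' : u ∉ P' := by simp [hP', hut, Finset.mem_erase]
    have hne' : P' ≠ P₂ := fun h => huP' (h ▸ hu₂)
    have hcard : (P₂ \ P').card = (P₂ \ P).card := by
      have : P₂ \ P' = insert u ((P₂ \ P).erase t) := by
        ext y
        simp only [hP', Finset.mem_sdiff, Finset.mem_insert, Finset.mem_erase,
          Finset.mem_sdiff]
        constructor
        · rintro ⟨hy₂, hy⟩
          by_cases hyu : y = u
          · exact Or.inl hyu
          · refine Or.inr ⟨?_, hy₂, fun hyP => hy (Or.inr ⟨hyu, hyP⟩)⟩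
            rintro rfl; exact hy (Or.inl rfl)
        · rintro (rfl | ⟨hyt, hy₂, hyP⟩)
          · exact ⟨hu₂, by simp [hut, Finset.mem_erase]⟩
          · exact ⟨hy₂, by simp [hyt, hyP]⟩
      rw [this, Finset.card_insert_of_notMem (by simp [Finset.mem_erase, huP]),
        Finset.card_erase_add_one (by simp [ht₂, htP])]
    have hsP' : s ∈ P' := by
      simp [hP', Finset.mem_insert, Finset.mem_erase, hus.symm, hsP]
    have hmem : w2.length ∈ wkset adj PS hsymm P₂ P' :=
      ⟨u, s, hu₂, huP', hsP', hsP₂, w2, rfl⟩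
    have hD' : DD adj PS hsymm P₂ P' ≤ w2.length := by
      rw [DD, if_neg hne']
      exact Nat.sInf_le hmem
    have : DD adj PS hsymm P₂ P' < DD adj PS hsymm P₂ P := by
      rw [hDP, ← hw]
      omega
    unfold Phi
    rw [hcard]
    omega
  · -- a misplaced pawn reached its target: card drops
    have hcard : (P₂ \ P').card + 1 = (P₂ \ P).card := by
      have : P₂ \ P' = (P₂ \ P).erase t := by
        ext y
        simp only [hP', Finset.mem_sdiff, Finset.mem_insert, Finset.mem_erase,
          Finset.mem_sdiff]
        constructor
        · rintro ⟨hy₂, hy⟩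
          refine ⟨fun h => hy (Or.inl h), hy₂, fun hyP => hy ?_⟩
          right
          exact ⟨fun h => hu₂ (h ▸ hy₂), hyP⟩
        · rintro ⟨hyt, hy₂, hyP⟩
          exact ⟨hy₂, by simp [hyt, hyP]⟩
      rw [this, Finset.card_erase_add_one (by simp [ht₂, htP])]
    have hD' : DD adj PS hsymm P₂ P' < Fintype.card S := by
      rcases eq_or_ne P' P₂ with h | h
      · rw [DD, if_pos h]
        exact Fintype.card_pos_iff.2 ⟨s⟩
      · rw [DD, if_neg h]
        exact sInf_wkset_lt hsymm P' P₂
          (wkset_nonempty hsymm hP'sub h₂ heq' h)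
    unfold Phi
    have h1 : Fintype.card S * (P₂ \ P).card
        = Fintype.card S * (P₂ \ P').card + Fintype.card S := by
      rw [← hcard]; ring
    omega

/-- Main induction: build the move sequence. -/
lemma reach_aux (hsymm : ∀ a b, adj a b → adj b a) {P₂ : Finset S} (h₂ : (P₂ : Set S) ⊆ PS) :
    ∀ (N : ℕ) (P : Finset S), (P : Set S) ⊆ PS → PawnEquiv adj PS P P₂ →
      Phi adj PS hsymm P₂ P ≤ N →
      ∃ m ≤ N, ∃ f : Fin (m + 1) → Finset S,
        f 0 = P ∧ f (Fin.last m) = P₂ ∧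
        (∀ i : Fin m, PawnMove adj PS (f i.castSucc) (f i.succ)) ∧
        (∀ i, PawnEquiv adj PS (f i) P₂) := by
  intro N
  induction N with
  | zero =>
    intro P hP heq hΦ
    have hPP₂ : P = P₂ := by
      by_contra hne
      obtain ⟨t, ht₂, htP⟩ := exists_target hsymm hP heq hne
      have hc : 1 ≤ (P₂ \ P).card :=
        Finset.card_pos.2 ⟨t, Finset.mem_sdiff.2 ⟨ht₂, htP⟩⟩
      have hn : 1 ≤ Fintype.card S := Fintype.card_pos_iff.2 ⟨t⟩
      have : 1 ≤ Phi adj PS hsymm P₂ P := by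
        unfold Phi
        calc 1 = 1 * 1 := by ring
        _ ≤ Fintype.card S * (P₂ \ P).card := Nat.mul_le_mul hn hc
        _ ≤ _ := Nat.le_add_right _ _
      omega
    subst hPP₂
    exact ⟨0, le_refl 0, fun _ => P, rfl, rfl, fun i => i.elim0,
      fun _ _ _ => rfl⟩
  | succ N ih =>
    intro P hP heq hΦ
    rcases eq_or_ne P P₂ with rfl | hne
    · exact ⟨0, Nat.zero_le _, fun _ => P, rfl, rfl, fun i => i.elim0,
        fun _ _ _ => rfl⟩
    · obtain ⟨P', hmove, hP'sub, heq', hΦ'⟩ := step_lemma hsymm h₂ hP heq hne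
      obtain ⟨m, hm, f, hf0, hfl, hfmove, hfeq⟩ := ih P' hP'sub heq' (by omega)
      refine ⟨m + 1, by omega, Fin.cons P f, ?_, ?_, ?_, ?_⟩
      · simp
      · rw [← Fin.succ_last, Fin.cons_succ]; exact hfl
      · intro i
        induction i using Fin.cases with
        | zero =>
          have e1 : (Fin.cons P f : Fin (m + 2) → Finset S)
              (Fin.castSucc 0) = P := by simp
          have e2 : (Fin.cons P f : Fin (m + 2) → Finset S)
              (Fin.succ 0) = P' := by
            rw [Fin.cons_succ, hf0]
          rw [e1, e2]; exact hmove
        | succ j =>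
          have e1 : (Fin.cons P f : Fin (m + 2) → Finset S)
              (Fin.castSucc j.succ) = f j.castSucc := by
            rw [← Fin.succ_castSucc, Fin.cons_succ]
          have e2 : (Fin.cons P f : Fin (m + 2) → Finset S)
              (Fin.succ j.succ) = f j.succ := by
            rw [Fin.cons_succ]
          rw [e1, e2]; exact hfmove j
      · intro i
        induction i using Fin.cases with
        | zero => simpa using heq
        | succ j => rw [Fin.cons_succ]; exact hfeq j

end PawnAux

/-- if two configurations on a board of `n` squares are
equivalent, then the second is reachable from the first by at most `n² - 1`
pawn moves, all intermediate configurations staying in the same class. -/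
theorem equiv_reachable_within_class {S : Type} [Fintype S] [DecidableEq S]
    (adj : S → S → Prop) (hsymm : ∀ a b, adj a b → adj b a)
    (n : ℕ) (hn : Fintype.card S = n)
    (B : Set S) (k : S) (PS : Set S) (hPS : PS = {s | s ∉ B ∧ s ≠ k})
    (P₁ P₂ : Finset S) (h₁ : (P₁ : Set S) ⊆ PS) (h₂ : (P₂ : Set S) ⊆ PS)
    (heq : PawnEquiv adj PS P₁ P₂) :
    ∃ m ≤ n ^ 2 - 1, ∃ f : Fin (m + 1) → Finset S,
      f 0 = P₁ ∧ f (Fin.last m) = P₂ ∧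
      (∀ i : Fin m, PawnMove adj PS (f i.castSucc) (f i.succ)) ∧
      (∀ i, PawnEquiv adj PS (f i) P₁) := by
  subst hn
  have hn1 : 1 ≤ Fintype.card S := Fintype.card_pos_iff.2 ⟨k⟩
  -- card of P₂ is at most n - 1 since k is not a pawn
  have hP₂sub : P₂ ⊆ Finset.univ.erase k := by
    intro x hx
    have : x ∈ PS := h₂ hx
    rw [hPS] at this
    exact Finset.mem_erase.2 ⟨this.2, Finset.mem_univ x⟩
  have hcard₂ : (P₂ \ P₁).card ≤ Fintype.card S - 1 := by
    calc (P₂ \ P₁).card ≤ P₂.card := Finset.card_le_card (Finset.sdiff_subset)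
    _ ≤ (Finset.univ.erase k).card := Finset.card_le_card hP₂sub
    _ = Fintype.card S - 1 := by
        rw [Finset.card_erase_of_mem (Finset.mem_univ k), Finset.card_univ]
  have hD : PawnAux.DD adj PS hsymm P₂ P₁ ≤ Fintype.card S - 1 := by
    rcases eq_or_ne P₁ P₂ with h | h
    · rw [PawnAux.DD, if_pos h]; omega
    · rw [PawnAux.DD, if_neg h]
      have := PawnAux.sInf_wkset_lt hsymm P₁ P₂
        (PawnAux.wkset_nonempty hsymm h₁ h₂ heq h)
      omega
  have hΦ : PawnAux.Phi adj PS hsymm P₂ P₁ ≤ Fintype.card S ^ 2 - 1 := by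
    unfold PawnAux.Phi
    obtain ⟨m, hm⟩ : ∃ m, Fintype.card S = m + 1 :=
      ⟨Fintype.card S - 1, by omega⟩
    rw [hm] at hcard₂ hD ⊢
    have hsq : (m + 1) ^ 2 = (m + 1) * m + m + 1 := by ring
    have h1 : (m + 1) * (P₂ \ P₁).card ≤ (m + 1) * m :=
      Nat.mul_le_mul_left _ (by omega)
    omega
  obtain ⟨m, hm, f, hf0, hfl, hfmove, hfeq⟩ :=
    PawnAux.reach_aux hsymm h₂ (Fintype.card S ^ 2 - 1) P₁ h₁ heq hΦ
  refine ⟨m, hm, f, hf0, hfl, hfmove, fun i x hx => ?_⟩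
  exact (hfeq i x hx).trans (heq x hx).symm
end

section
/- Along a shortest path in a connected region R from an occupied square s to an empty square t, moving each pawn on the path one step toward t (processing from the pawn nearest t backwards) yields a valid sequence of single-step pawn moves whose net effect is that t becomes occupied and s becomes empty, with all other pawn positions unchanged. -/
/-- A single-step pawn move: a pawn on an occupied square moves to an adjacent
empty square. -/
def SingleStepMove {V : Type} [DecidableEq V] (G : SimpleGraph V)
    (P P' : Finset V) : Prop :=
  ∃ a ∈ P, ∃ b, G.Adj a b ∧ b ∉ P ∧ P' = insert b (P.erase a)

lemma chain_snoc {α} {R : α → α → Prop} :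
    ∀ {a : α} {L : List α} {b : α}, List.Chain R a L →
      R ((a :: L).getLast (by simp)) b → List.Chain R a (L ++ [b])
  | a, [], b => by intro _ hb; exact List.IsChain.cons_cons hb (List.IsChain.singleton b)
  | a, c :: L, b => by
    intro h hb
    change List.IsChain R (a :: c :: L) at h; rw [List.chain_cons] at h
    change List.IsChain R (a :: (c :: L ++ [b])); rw [List.cons_append, List.chain_cons]
    refine ⟨h.1, chain_snoc h.2 ?_⟩
    simpa [List.getLast_cons] using hb

lemma getLast_cons_snoc {α} : ∀ (a : α) (L : List α) (b : α),
    (a :: (L ++ [b])).getLast (by simp) = b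
  | _, [], _ => rfl
  | _, c :: L, b => getLast_cons_snoc c L b

lemma aux_shift {V : Type} [DecidableEq V] (G : SimpleGraph V) :
    ∀ {s t : V} (p : G.Walk s t) (P : Finset V), s ∈ P → t ∉ P →
      ∃ L : List (Finset V), L.length ≤ p.length ∧
        List.Chain (SingleStepMove G) P L ∧
        (P :: L).getLast (by simp) = insert t (P.erase s) := by
  intro s t p
  induction p with
  | nil => intro P hs ht; exact absurd hs ht
  | @cons u v w h q ih =>
    intro P hs ht
    by_cases hv : v ∈ P
    · have hvt : v ≠ w := fun e => ht (e ▸ hv)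
      obtain ⟨L, hlen, hchain, hlast⟩ := ih P hv ht
      have huv : u ≠ v := G.ne_of_adj h
      set Q := insert w (P.erase v) with hQ
      have hsQ : u ∈ Q := by
        simp [hQ, Finset.mem_insert, Finset.mem_erase, huv, hs]
      have hvQ : v ∉ Q := by
        simp [hQ, Finset.mem_insert, Finset.mem_erase, hvt]
      refine ⟨L ++ [insert v (Q.erase u)], by simpa using Nat.succ_le_succ hlen, ?_, ?_⟩
      · refine chain_snoc hchain ?_
        rw [hlast]
        exact ⟨u, hsQ, v, h, hvQ, rfl⟩
      · rw [getLast_cons_snoc]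
        have hwu : w ≠ u := fun e => ht (e ▸ hs)
        ext x
        simp only [hQ, Finset.mem_insert, Finset.mem_erase]
        constructor
        · rintro (rfl | ⟨hxu, rfl | ⟨-, hxP⟩⟩)
          · exact Or.inr ⟨huv.symm, hv⟩
          · exact Or.inl rfl
          · exact Or.inr ⟨hxu, hxP⟩
        · rintro (rfl | ⟨hxu, hxP⟩)
          · exact Or.inr ⟨hwu, Or.inl rfl⟩
          · by_cases hxv : x = v
            · exact Or.inl hxv
            · exact Or.inr ⟨hxu, Or.inr ⟨hxv, hxP⟩⟩
    · by_cases hvt : v = w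
      · subst hvt
        exact ⟨[insert v (P.erase u)], by simp, List.chain_cons.2
          ⟨⟨u, hs, v, h, hv, rfl⟩, List.Chain.nil⟩, by simp⟩
      · obtain ⟨L, hlen, hchain, hlast⟩ := ih (insert v (P.erase u)) (by simp)
          (by simp only [Finset.mem_insert, Finset.mem_erase]
              rintro (rfl | ⟨-, hw⟩)
              exacts [hvt rfl, ht hw])
        refine ⟨insert v (P.erase u) :: L, by simpa using Nat.succ_le_succ hlen, ?_, ?_⟩
        · exact List.chain_cons.2 ⟨⟨u, hs, v, h, hv, rfl⟩, hchain⟩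
        · rw [List.getLast_cons, hlast, Finset.erase_insert (fun hh => hv (Finset.mem_of_mem_erase hh))]
          exact List.cons_ne_nil _ _

/-- given a shortest path in a connected region `R` (modelled as a
connected graph `G`) from an occupied square `s` to an empty square `t`,
shifting each pawn on the path one step toward `t` (processing from the pawn
nearest `t` backwards) is a valid sequence of single-step pawn moves whose net
effect is that `t` becomes occupied and `s` becomes empty, all other pawn
positions unchanged. -/
theorem shift_along_shortest_path {V : Type} [DecidableEq V] (G : SimpleGraph V)
    (hconn : G.Connected) (P : Finset V) (s t : V) (hs : s ∈ P) (ht : t ∉ P)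
    (p : G.Walk s t) (hshort : p.length = G.dist s t) :
    ∃ m ≤ p.length, ∃ f : Fin (m + 1) → Finset V,
      f 0 = P ∧ f (Fin.last m) = insert t (P.erase s) ∧
      ∀ i : Fin m, SingleStepMove G (f i.castSucc) (f i.succ) := by
  obtain ⟨L, hlen, hchain, hlast⟩ := aux_shift G p P hs ht
  refine ⟨L.length, hlen, fun i => (P :: L).get ⟨i, by simpa using i.isLt⟩, ?_, ?_, ?_⟩
  · rfl
  · rw [← hlast]
    rw [List.getLast_eq_getElem]; simp
  · intro i
    have hc : List.Chain' (SingleStepMove G) (P :: L) := hchain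
    have := List.isChain_iff_getElem.1 hc i (by simpa using i.isLt)
    simpa using this
end
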